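/- Let u : [θ,1] → ℝ be defined by u(v) = √(3v·c₁/m) + √(2(v + √(3v·c₁/m))·c₂/m) + 2c₂/m for positive constants c₁, c₂, m, θ with θ ≤ 1. If u(θ) ≤ ε·θ for some ε > 0, then u(v) ≤ ε·v for all v ∈ [θ, 1]. -/

import Mathlib

/-!
Every summand of `u` satisfies `f (t * v) ≤ t * f v` for `t ≥ 1`: the radicands are at most
linear in `v`, `√(t * x) = √t * √x ≤ t * √x`, and the constant term only grows when multiplied
by `t`. Hence `u v / v` is nonincreasing for `v > 0`, and `u θ ≤ ε * θ` propagates from `θ` to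
every `v = (v / θ) * θ ≥ θ`.
-/

open Real

theorem sqrt_mul_le_mul_sqrt {t : ℝ} (ht : 1 ≤ t) (x : ℝ) : √(t * x) ≤ t * √x := by
  rw [Real.sqrt_mul (by linarith)]
  exact mul_le_mul_of_nonneg_right (sqrt_le_self_iff.mpr (Or.inr ht)) (Real.sqrt_nonneg x)

def ScalesSublinearly (f : ℝ → ℝ) : Prop :=
  ∀ t, 1 ≤ t → ∀ x, f (t * x) ≤ t * f x

namespace ScalesSublinearly

variable {f g : ℝ → ℝ}

theorem of_homogeneous (hf : ∀ t x, f (t * x) = t * f x) : ScalesSublinearly f :=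
  fun t _ x => (hf t x).le

theorem id : ScalesSublinearly fun x => x :=
  of_homogeneous fun _ _ => rfl

theorem const {c : ℝ} (hc : 0 ≤ c) : ScalesSublinearly fun _ => c :=
  fun _ ht _ => le_mul_of_one_le_left hc ht

theorem add (hf : ScalesSublinearly f) (hg : ScalesSublinearly g) :
    ScalesSublinearly fun x => f x + g x :=
  fun t ht x => by linarith [hf t ht x, hg t ht x]

theorem const_mul (hf : ScalesSublinearly f) {c : ℝ} (hc : 0 ≤ c) :
    ScalesSublinearly fun x => c * f x :=
  fun t ht x => by nlinarith [hf t ht x]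

theorem mul_const (hf : ScalesSublinearly f) {c : ℝ} (hc : 0 ≤ c) :
    ScalesSublinearly fun x => f x * c :=
  fun t ht x => by nlinarith [hf t ht x]

theorem div_const (hf : ScalesSublinearly f) {c : ℝ} (hc : 0 ≤ c) :
    ScalesSublinearly fun x => f x / c :=
  fun t ht x => by
    rw [mul_div_assoc']
    exact div_le_div_of_nonneg_right (hf t ht x) hc

theorem sqrt (hf : ScalesSublinearly f) : ScalesSublinearly fun x => √(f x) :=
  fun t ht x => (Real.sqrt_le_sqrt (hf t ht x)).trans (sqrt_mul_le_mul_sqrt ht (f x))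

theorem le_mul_of_le_mul (hf : ScalesSublinearly f) {θ ε v : ℝ} (hθ : 0 < θ)
    (hfθ : f θ ≤ ε * θ) (hv : θ ≤ v) : f v ≤ ε * v := by
  have ht : 1 ≤ v / θ := (one_le_div hθ).mpr hv
  calc f v = f (v / θ * θ) := by rw [div_mul_cancel₀ v hθ.ne']
    _ ≤ v / θ * f θ := hf _ ht θ
    _ ≤ v / θ * (ε * θ) := mul_le_mul_of_nonneg_left hfθ (by linarith)
    _ = ε * v := by field_simp

end ScalesSublinearly

theorem stmt_15_general (c₁ c₂ m θ ε : ℝ)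
    (hc₂ : 0 < c₂) (hm : 0 < m) (hθ0 : 0 < θ)
    (u : ℝ → ℝ)
    (hu : ∀ v, u v = Real.sqrt (3 * v * c₁ / m)
        + Real.sqrt (2 * (v + Real.sqrt (3 * v * c₁ / m)) * c₂ / m) + 2 * c₂ / m)
    (hθ : u θ ≤ ε * θ) :
    ∀ v, θ ≤ v → v ≤ 1 → u v ≤ ε * v := by
  have radicand : ScalesSublinearly fun v => 3 * v * c₁ / m :=
    .of_homogeneous fun t v => by ring
  have hu_scales : ScalesSublinearly u := by
    rw [funext hu]
    have inner : ScalesSublinearly fun v => 2 * (v + √(3 * v * c₁ / m)) * c₂ / m :=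
      (((ScalesSublinearly.id.add radicand.sqrt).const_mul zero_le_two).mul_const hc₂.le).div_const
        hm.le
    exact (radicand.sqrt.add inner.sqrt).add (.const (by positivity))
  exact fun v hv _ => hu_scales.le_mul_of_le_mul hθ0 hθ hv

theorem stmt_15 (c₁ c₂ m θ ε : ℝ)
    (hc₁ : 0 < c₁) (hc₂ : 0 < c₂) (hm : 0 < m) (hθ0 : 0 < θ) (hθ1 : θ ≤ 1) (hε : 0 < ε)
    (u : ℝ → ℝ)
    (hu : ∀ v, u v = Real.sqrt (3 * v * c₁ / m)
        + Real.sqrt (2 * (v + Real.sqrt (3 * v * c₁ / m)) * c₂ / m) + 2 * c₂ / m)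
    (hθ : u θ ≤ ε * θ) :
    ∀ v, θ ≤ v → v ≤ 1 → u v ≤ ε * v :=
  stmt_15_general c₁ c₂ m θ ε hc₂ hm hθ0 u hu hθ
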